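/- Let φ be smooth on ℝⁿ and α = Σ'_{|J|=p+1} α_J dx^J a smooth (p+1)-form with compact support. With T*α = Σ'_{|I|=p} A_I dx^I where A_I = −e^{φ} Σ_{j=1}^n ∂(α_{jI} e^{-φ})/∂x_j, one has the identity ‖T*α‖²_{L²_p(e^{-φ})} + ‖dα‖²_{L²_{p+2}(e^{-φ})} = ∫_{ℝⁿ} Σ'_{|I|=p} Σ_{j,k=1}^n (∂²φ/∂x_j∂x_k) α_{jI} α_{kI} e^{-φ} + ∫_{ℝⁿ} Σ'_{|J|=p+1} Σ_{j=1}^n |∂α_J/∂x_j|² e^{-φ}. -/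

import Mathlib

open MeasureTheory Filter Topology

noncomputable section

/-- Euclidean space `ℝⁿ`. -/
abbrev Rn (n : ℕ) := EuclideanSpace ℝ (Fin n)

variable {n : ℕ}

/-- The partial derivative `∂f/∂x_j` (classical, via the Fréchet derivative). -/
def pd (j : Fin n) (f : Rn n → ℝ) (x : Rn n) : ℝ :=
  fderiv ℝ f x (EuclideanSpace.single j 1)

/-- Smooth compactly supported test functions. -/
def IsTest (ψ : Rn n → ℝ) : Prop := ContDiff ℝ (⊤ : ℕ∞) ψ ∧ HasCompactSupport ψ

/-- A `p`-form on `ℝⁿ`, given by its (antisymmetric) coefficients on all `p`-tuples. -/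
abbrev Form (n p : ℕ) := (Fin p → Fin n) → Rn n → ℝ

/-- The coefficients are alternating (antisymmetric) in the indices. -/
def IsAlt {p : ℕ} (α : Form n p) : Prop :=
  ∀ (σ : Equiv.Perm (Fin p)) (J : Fin p → Fin n) (x : Rn n),
    α (J ∘ σ) x = ((Equiv.Perm.sign σ : ℤ) : ℝ) * α J x

/-- Pointwise squared norm `|α|²(x)`: sum of squares of the coefficients over strictly
increasing multi-indices, here expressed as `(p!)⁻¹` times the sum over all tuples. -/
def normSq {p : ℕ} (α : Form n p) (x : Rn n) : ℝ :=
  (Nat.factorial p : ℝ)⁻¹ * ∑ J : Fin p → Fin n, (α J x) ^ 2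

/-- Membership in the weighted space `L²_p(ℝⁿ, e^{-φ})`. -/
def MemL2F (φ : Rn n → ℝ) {p : ℕ} (α : Form n p) : Prop :=
  (∀ J, AEStronglyMeasurable (α J) volume) ∧
  Integrable (fun x => normSq α x * Real.exp (-(φ x)))

/-- The weighted inner product `⟨α, β⟩_{L²_p(e^{-φ})}`. -/
def innerF (φ : Rn n → ℝ) {p : ℕ} (α β : Form n p) : ℝ :=
  ∫ x, ((Nat.factorial p : ℝ)⁻¹ * ∑ J : Fin p → Fin n, α J x * β J x) * Real.exp (-(φ x))

/-- The weighted squared norm `‖α‖²_{L²_p(e^{-φ})} = ∫ |α|² e^{-φ}`. -/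
def norm2F (φ : Rn n → ℝ) {p : ℕ} (α : Form n p) : ℝ :=
  ∫ x, normSq α x * Real.exp (-(φ x))

/-- `du = f` in the sense of distributions, in coordinates:
`f_M = Σ_k (-1)^k ∂_{M k} u_{M ∘ succAbove k}` tested against all test functions. -/
def WeakD {p : ℕ} (u : Form n p) (f : Form n (p + 1)) : Prop :=
  ∀ (M : Fin (p + 1) → Fin n) (ψ : Rn n → ℝ), IsTest ψ →
    ∫ x, f M x * ψ x
      = - ∑ k : Fin (p + 1), (-1 : ℝ) ^ (k : ℕ) * ∫ x, u (M ∘ k.succAbove) x * pd (M k) ψ x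

/-- `df = 0` in the sense of distributions (`f` is `d`-closed). -/
def WeakDZero {p : ℕ} (f : Form n (p + 1)) : Prop :=
  ∀ (M : Fin (p + 2) → Fin n) (ψ : Rn n → ℝ), IsTest ψ →
    ∑ k : Fin (p + 2), (-1 : ℝ) ^ (k : ℕ) * ∫ x, f (M ∘ k.succAbove) x * pd (M k) ψ x = 0

/-- Classical exterior derivative of a smooth form. -/
def dC {p : ℕ} (α : Form n p) : Form n (p + 1) :=
  fun M x => ∑ k : Fin (p + 1), (-1 : ℝ) ^ (k : ℕ) * pd (M k) (α (M ∘ k.succAbove)) x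

/-- The formal adjoint `T*` of `d` in `L²(e^{-φ})`:
`(T*α)_I = -e^{φ} Σ_j ∂_j (α_{jI} e^{-φ}) = Σ_j (-∂_j α_{jI} + α_{jI} ∂_j φ)`. -/
def Tstar (φ : Rn n → ℝ) {p : ℕ} (α : Form n (p + 1)) : Form n p :=
  fun I x => ∑ j : Fin n,
    (-(pd j (α (Fin.cons j I)) x) + α (Fin.cons j I) x * pd j φ x)

/-- A form with smooth compactly supported coefficients. -/
def IsSmoothC {p : ℕ} (α : Form n p) : Prop :=
  ∀ J, ContDiff ℝ (⊤ : ℕ∞) (α J) ∧ HasCompactSupport (α J)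

/-- `f ∈ Dom(T*)` with `T* f = h`, for the Hilbert space adjoint `T*` of the maximal
(distributional) extension `T` of `d : L²_p(e^{-φ}) → L²_{p+1}(e^{-φ})`. -/
def IsAdjoint (φ : Rn n → ℝ) {p : ℕ} (f : Form n (p + 1)) (h : Form n p) : Prop :=
  MemL2F φ f ∧ MemL2F φ h ∧
  ∀ (u : Form n p) (g : Form n (p + 1)), MemL2F φ u → MemL2F φ g → WeakD u g →
    innerF φ g f = innerF φ u h


section Aux

variable {n : ℕ}

/-- Moving the `r`-th entry of a tuple to the front costs a sign `(-1)^r`. -/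
lemma alt_cons {q : ℕ} {β : (Fin (q + 1) → Fin n) → ℝ}
    (hβ : ∀ (σ : Equiv.Perm (Fin (q + 1))) (J : Fin (q + 1) → Fin n),
      β (J ∘ σ) = ((Equiv.Perm.sign σ : ℤ) : ℝ) * β J)
    (T : Fin (q + 1) → Fin n) (r : Fin (q + 1)) :
    β (Fin.cons (T r) (T ∘ Fin.succAbove r)) = (-1 : ℝ) ^ (r : ℕ) * β T := by
  have h1 : (Fin.cons (T r) (T ∘ Fin.succAbove r) : Fin (q + 1) → Fin n)
      = T ∘ (r.cycleRange.symm : Equiv.Perm (Fin (q + 1))) := by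
    funext i
    induction i using Fin.cases with
    | zero => simp [Fin.cycleRange_symm_zero]
    | succ i => simp [Fin.cycleRange_symm_succ]
  rw [h1, hβ]
  congr 1
  have : Equiv.Perm.sign (r.cycleRange.symm : Equiv.Perm (Fin (q + 1)))
      = (-1 : ℤˣ) ^ (r : ℕ) := by
    rw [show (r.cycleRange.symm : Equiv.Perm (Fin (q+1))) = (r.cycleRange)⁻¹ from rfl,
      Equiv.Perm.sign_inv, Fin.sign_cycleRange]
  rw [this]
  push_cast
  ring

lemma succAbove_cases {m : ℕ} {k l : Fin (m + 1)} {r : Fin m}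
    (hr : k.succAbove r = l) :
    ((l : ℕ) = r ∧ (r : ℕ) < k) ∨ ((l : ℕ) = r + 1 ∧ (k : ℕ) ≤ r) := by
  rcases lt_or_ge (Fin.castSucc r) k with h | h
  · left
    rw [Fin.succAbove_of_castSucc_lt _ _ h] at hr
    constructor
    · rw [← hr]; simp
    · simpa [Fin.lt_def] using h
  · right
    rw [Fin.succAbove_of_le_castSucc _ _ h] at hr
    constructor
    · rw [← hr]; simp
    · simpa [Fin.le_def] using h

lemma parity_odd {m : ℕ} {k l : Fin (m + 1)} {r s : Fin m}
    (hr : k.succAbove r = l) (hs : l.succAbove s = k) :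
    Odd ((k : ℕ) + (l : ℕ) + (r : ℕ) + (s : ℕ)) := by
  have h1 := succAbove_cases hr
  have h2 := succAbove_cases hs
  rw [Nat.odd_iff]
  omega

lemma range_succAbove_comp {m : ℕ} (k l : Fin (m + 2)) (r : Fin (m + 1))
    (hr : k.succAbove r = l) :
    Set.range (k.succAbove ∘ r.succAbove) = ({k, l}ᶜ : Set (Fin (m + 2))) := by
  rw [Set.range_comp, Fin.range_succAbove, Set.compl_eq_univ_diff,
    Set.image_diff Fin.succAbove_right_injective, Set.image_univ, Fin.range_succAbove,
    Set.image_singleton, hr]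
  ext x
  simp only [Set.mem_diff, Set.mem_compl_iff, Set.mem_singleton_iff, Set.mem_insert_iff]
  tauto

lemma succAbove_comp {m : ℕ} {k l : Fin (m + 2)} {r s : Fin (m + 1)}
    (hr : k.succAbove r = l) (hs : l.succAbove s = k) :
    k.succAbove ∘ r.succAbove = l.succAbove ∘ s.succAbove := by
  have hmono1 : StrictMono (k.succAbove ∘ r.succAbove) :=
    (Fin.strictMono_succAbove k).comp (Fin.strictMono_succAbove r)
  have hmono2 : StrictMono (l.succAbove ∘ s.succAbove) :=
    (Fin.strictMono_succAbove l).comp (Fin.strictMono_succAbove s)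
  haveI : WellFoundedLT (Fin (m + 1)) := inferInstance
  haveI : WellFoundedLT (Fin m) := inferInstance
  refine (hmono1.range_inj hmono2).1 ?_
  rw [range_succAbove_comp k l r hr, range_succAbove_comp l k s hs, Set.pair_comm]

lemma sum_insertNth {q : ℕ} (k : Fin (q + 1)) (f : (Fin (q + 1) → Fin n) → ℝ) :
    ∑ M : Fin (q + 1) → Fin n, f M
      = ∑ a : Fin n, ∑ T : Fin q → Fin n, f (Fin.insertNth (α := fun _ => Fin n) k a T) := by
  rw [show (∑ a : Fin n, ∑ T : Fin q → Fin n, f (Fin.insertNth (α := fun _ => Fin n) k a T))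
      = ∑ aT : Fin n × (Fin q → Fin n), f (Fin.insertNth k aT.1 aT.2) from
    (Fintype.sum_prod_type
      (fun aT : Fin n × (Fin q → Fin n) => f (Fin.insertNth k aT.1 aT.2))).symm]
  exact (Fintype.sum_equiv (Fin.insertNthEquiv (fun _ => Fin n) k)
    (fun aT => f (Fin.insertNth k aT.1 aT.2)) f (fun x => rfl)).symm

lemma diag_sum {p : ℕ} (D : Fin n → (Fin (p + 1) → Fin n) → ℝ) (k : Fin (p + 2)) :
    (∑ M : Fin (p + 2) → Fin n,
        ((-1 : ℝ) ^ (k : ℕ) * D (M k) (M ∘ k.succAbove))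
          * ((-1 : ℝ) ^ (k : ℕ) * D (M k) (M ∘ k.succAbove)))
      = ∑ J : Fin (p + 1) → Fin n, ∑ j : Fin n, (D j J) ^ 2 := by
  rw [sum_insertNth k]
  rw [Finset.sum_comm]
  refine Finset.sum_congr rfl fun T _ => Finset.sum_congr rfl fun a _ => ?_
  have h2 : (Fin.insertNth (α := fun _ => Fin n) k a T) ∘ k.succAbove = T :=
    by funext i; simp
  rw [h2, Fin.insertNth_apply_same (α := fun _ => Fin n)]
  have h3 : (-1 : ℝ) ^ (k : ℕ) * (-1 : ℝ) ^ (k : ℕ) = 1 := by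
    rw [← mul_pow]; norm_num
  rw [mul_mul_mul_comm, h3, one_mul, ← pow_two]

lemma sum3_comm {A B C : Type*} [Fintype A] [Fintype B] [Fintype C] (F : A → B → C → ℝ) :
    ∑ a : A, ∑ b : B, ∑ c : C, F a b c = ∑ c : C, ∑ b : B, ∑ a : A, F a b c := by
  calc ∑ a : A, ∑ b : B, ∑ c : C, F a b c
      = ∑ a : A, ∑ c : C, ∑ b : B, F a b c :=
        Finset.sum_congr rfl fun a _ => Finset.sum_comm
    _ = ∑ c : C, ∑ a : A, ∑ b : B, F a b c := Finset.sum_comm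
    _ = ∑ c : C, ∑ b : B, ∑ a : A, F a b c :=
        Finset.sum_congr rfl fun c _ => Finset.sum_comm

lemma offdiag_sum {p : ℕ} (D : Fin n → (Fin (p + 1) → Fin n) → ℝ)
    (hD : ∀ (a : Fin n) (σ : Equiv.Perm (Fin (p + 1))) (J : Fin (p + 1) → Fin n),
      D a (J ∘ σ) = ((Equiv.Perm.sign σ : ℤ) : ℝ) * D a J)
    {k l : Fin (p + 2)} (hkl : k ≠ l) :
    (∑ M : Fin (p + 2) → Fin n,
        ((-1 : ℝ) ^ (k : ℕ) * D (M k) (M ∘ k.succAbove))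
          * ((-1 : ℝ) ^ (l : ℕ) * D (M l) (M ∘ l.succAbove)))
      = - ∑ I : Fin p → Fin n, ∑ j : Fin n, ∑ c : Fin n,
          D c (Fin.cons j I) * D j (Fin.cons c I) := by
  obtain ⟨r, hr⟩ := Fin.exists_succAbove_eq hkl.symm
  obtain ⟨s, hs⟩ := Fin.exists_succAbove_eq hkl
  have hcomp := succAbove_comp hr hs
  have hsign : (-1 : ℝ) ^ (k : ℕ) * (-1 : ℝ) ^ (r : ℕ)
      * ((-1 : ℝ) ^ (l : ℕ) * (-1 : ℝ) ^ (s : ℕ)) = -1 := by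
    rw [← pow_add, ← pow_add, ← pow_add]
    refine Odd.neg_one_pow ?_
    have := parity_odd hr hs
    rw [Nat.odd_iff] at this ⊢
    omega
  rw [sum_insertNth k]
  have key : ∀ (a : Fin n) (T : Fin (p + 1) → Fin n),
      ((-1 : ℝ) ^ (k : ℕ) * D ((Fin.insertNth (α := fun _ => Fin n) k a T) k) ((Fin.insertNth (α := fun _ => Fin n) k a T) ∘ k.succAbove))
        * ((-1 : ℝ) ^ (l : ℕ) * D ((Fin.insertNth (α := fun _ => Fin n) k a T) l) ((Fin.insertNth (α := fun _ => Fin n) k a T) ∘ l.succAbove))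
      = - (D a (Fin.cons (T r) (T ∘ r.succAbove)) * D (T r) (Fin.cons a (T ∘ r.succAbove))) := by
    intro a T
    set M : Fin (p + 2) → Fin n := Fin.insertNth (α := fun _ => Fin n) k a T with hM
    have hMk : M k = a := Fin.insertNth_apply_same (α := fun _ => Fin n) k a T
    have hMsk : M ∘ k.succAbove = T := by funext i; simp [hM]
    have hMl : M l = T r := by rw [← hr]; show M (k.succAbove r) = T r; rw [show M (k.succAbove r) = (M ∘ k.succAbove) r from rfl, hMsk]
    have hT's : (M ∘ l.succAbove) s = a := by
      show M (l.succAbove s) = a; rw [hs, hMk]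
    have hT'c : (M ∘ l.succAbove) ∘ s.succAbove = T ∘ r.succAbove := by
      rw [Function.comp_assoc, ← hcomp, ← Function.comp_assoc, hMsk]
    -- alternation facts
    have e1 : D a (Fin.cons (T r) (T ∘ r.succAbove)) = (-1 : ℝ) ^ (r : ℕ) * D a T :=
      alt_cons (hD a) T r
    have e2' : D (T r) (Fin.cons ((M ∘ l.succAbove) s) ((M ∘ l.succAbove) ∘ s.succAbove))
        = (-1 : ℝ) ^ (s : ℕ) * D (T r) (M ∘ l.succAbove) :=
      alt_cons (hD (T r)) (M ∘ l.succAbove) s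
    rw [hT's, hT'c] at e2'
    have f1 : D a T = (-1 : ℝ) ^ (r : ℕ) * D a (Fin.cons (T r) (T ∘ r.succAbove)) := by
      rw [e1, ← mul_assoc, ← mul_pow]; norm_num
    have f2 : D (T r) (M ∘ l.succAbove)
        = (-1 : ℝ) ^ (s : ℕ) * D (T r) (Fin.cons a (T ∘ r.succAbove)) := by
      rw [e2', ← mul_assoc, ← mul_pow]; norm_num
    rw [hMk, hMsk, hMl, f1, f2]
    calc ((-1:ℝ) ^ (k:ℕ) * ((-1:ℝ) ^ (r:ℕ) * D a (Fin.cons (T r) (T ∘ r.succAbove))))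
          * ((-1:ℝ) ^ (l:ℕ) * ((-1:ℝ) ^ (s:ℕ) * D (T r) (Fin.cons a (T ∘ r.succAbove))))
        = ((-1:ℝ) ^ (k:ℕ) * (-1:ℝ) ^ (r:ℕ) * ((-1:ℝ) ^ (l:ℕ) * (-1:ℝ) ^ (s:ℕ)))
          * (D a (Fin.cons (T r) (T ∘ r.succAbove)) * D (T r) (Fin.cons a (T ∘ r.succAbove))) := by
          ring
      _ = - (D a (Fin.cons (T r) (T ∘ r.succAbove)) * D (T r) (Fin.cons a (T ∘ r.succAbove))) := by
          rw [hsign]; ring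
  calc (∑ a : Fin n, ∑ T : Fin (p + 1) → Fin n,
        ((-1 : ℝ) ^ (k : ℕ) * D ((Fin.insertNth (α := fun _ => Fin n) k a T) k) ((Fin.insertNth (α := fun _ => Fin n) k a T) ∘ k.succAbove))
          * ((-1 : ℝ) ^ (l : ℕ) * D ((Fin.insertNth (α := fun _ => Fin n) k a T) l) ((Fin.insertNth (α := fun _ => Fin n) k a T) ∘ l.succAbove)))
      = ∑ a : Fin n, ∑ T : Fin (p + 1) → Fin n,
          - (D a (Fin.cons (T r) (T ∘ r.succAbove)) * D (T r) (Fin.cons a (T ∘ r.succAbove))) := by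
        exact Finset.sum_congr rfl fun a _ => Finset.sum_congr rfl fun T _ => key a T
    _ = ∑ a : Fin n, ∑ b : Fin n, ∑ I : Fin p → Fin n,
          - (D a (Fin.cons b I) * D b (Fin.cons a I)) := by
        refine Finset.sum_congr rfl fun a _ => ?_
        rw [sum_insertNth r]
        refine Finset.sum_congr rfl fun b _ => Finset.sum_congr rfl fun I _ => ?_
        have g1 : Fin.insertNth (α := fun _ => Fin n) r b I r = b := Fin.insertNth_apply_same (α := fun _ => Fin n) r b I
        have g2 : (Fin.insertNth (α := fun _ => Fin n) r b I) ∘ r.succAbove = I := by funext i; simp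
        rw [g1, g2]
    _ = - ∑ I : Fin p → Fin n, ∑ j : Fin n, ∑ c : Fin n,
          D c (Fin.cons j I) * D j (Fin.cons c I) := by
        rw [sum3_comm (fun a b I => - (D a (Fin.cons b I) * D b (Fin.cons a I)))]
        simp

lemma comb_main {p : ℕ} (D : Fin n → (Fin (p + 1) → Fin n) → ℝ)
    (hD : ∀ (a : Fin n) (σ : Equiv.Perm (Fin (p + 1))) (J : Fin (p + 1) → Fin n),
      D a (J ∘ σ) = ((Equiv.Perm.sign σ : ℤ) : ℝ) * D a J) :
    ((Nat.factorial (p + 2) : ℝ))⁻¹ * ∑ M : Fin (p + 2) → Fin n,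
        (∑ k : Fin (p + 2), (-1 : ℝ) ^ (k : ℕ) * D (M k) (M ∘ k.succAbove)) ^ 2
      = ((Nat.factorial (p + 1) : ℝ))⁻¹
          * (∑ J : Fin (p + 1) → Fin n, ∑ j : Fin n, (D j J) ^ 2)
        - ((Nat.factorial p : ℝ))⁻¹
          * (∑ I : Fin p → Fin n, ∑ j : Fin n, ∑ c : Fin n,
              D c (Fin.cons j I) * D j (Fin.cons c I)) := by
  classical
  set A : ℝ := ∑ J : Fin (p + 1) → Fin n, ∑ j : Fin n, (D j J) ^ 2 with hA
  set B : ℝ := ∑ I : Fin p → Fin n, ∑ j : Fin n, ∑ c : Fin n,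
      D c (Fin.cons j I) * D j (Fin.cons c I) with hB
  have expand : ∑ M : Fin (p + 2) → Fin n,
      (∑ k : Fin (p + 2), (-1 : ℝ) ^ (k : ℕ) * D (M k) (M ∘ k.succAbove)) ^ 2
      = ∑ k : Fin (p + 2), ∑ l : Fin (p + 2), ∑ M : Fin (p + 2) → Fin n,
          ((-1 : ℝ) ^ (k : ℕ) * D (M k) (M ∘ k.succAbove))
            * ((-1 : ℝ) ^ (l : ℕ) * D (M l) (M ∘ l.succAbove)) := by
    rw [show (∑ M : Fin (p + 2) → Fin n,
        (∑ k : Fin (p + 2), (-1 : ℝ) ^ (k : ℕ) * D (M k) (M ∘ k.succAbove)) ^ 2)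
        = ∑ M : Fin (p + 2) → Fin n, ∑ k : Fin (p + 2), ∑ l : Fin (p + 2),
          ((-1 : ℝ) ^ (k : ℕ) * D (M k) (M ∘ k.succAbove))
            * ((-1 : ℝ) ^ (l : ℕ) * D (M l) (M ∘ l.succAbove)) from
      Finset.sum_congr rfl fun M _ => by rw [pow_two, Finset.sum_mul_sum]]
    rw [Finset.sum_comm]
    exact Finset.sum_congr rfl fun k _ => Finset.sum_comm
  have inner : ∀ k : Fin (p + 2),
      (∑ l : Fin (p + 2), ∑ M : Fin (p + 2) → Fin n,
        ((-1 : ℝ) ^ (k : ℕ) * D (M k) (M ∘ k.succAbove))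
          * ((-1 : ℝ) ^ (l : ℕ) * D (M l) (M ∘ l.succAbove)))
      = A - (p + 1 : ℝ) * B := by
    intro k
    rw [← Finset.sum_erase_add _ _ (Finset.mem_univ k)]
    have h1 : ∑ l ∈ Finset.univ.erase k, ∑ M : Fin (p + 2) → Fin n,
        ((-1 : ℝ) ^ (k : ℕ) * D (M k) (M ∘ k.succAbove))
          * ((-1 : ℝ) ^ (l : ℕ) * D (M l) (M ∘ l.succAbove)) = (p + 1 : ℝ) * (-B) := by
      rw [Finset.sum_congr rfl (fun l hl =>
        offdiag_sum D hD (Finset.ne_of_mem_erase hl).symm)]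
      rw [Finset.sum_const, Finset.card_erase_of_mem (Finset.mem_univ k), Finset.card_univ]
      simp [Fintype.card_fin, hB]
    rw [h1, diag_sum D k, ← hA]
    ring
  rw [expand, Finset.sum_congr rfl fun k _ => inner k, Finset.sum_const, Finset.card_univ]
  simp only [Fintype.card_fin, nsmul_eq_mul]
  have hf2 : ((p + 2).factorial : ℝ) = (p + 2) * ((p + 1) * (p.factorial : ℝ)) := by
    rw [Nat.factorial_succ, Nat.factorial_succ]; push_cast; ring
  have hf1 : ((p + 1).factorial : ℝ) = (p + 1) * (p.factorial : ℝ) := by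
    rw [Nat.factorial_succ]; push_cast; ring
  have hp0 : (p.factorial : ℝ) ≠ 0 := Nat.cast_ne_zero.2 p.factorial_ne_zero
  rw [hf2, hf1]
  have h1 : ((p : ℝ) + 2) ≠ 0 := by positivity
  have h2 : ((p : ℝ) + 1) ≠ 0 := by positivity
  field_simp
  push_cast
  ring


lemma pd_contDiff {f : Rn n → ℝ} (hf : ContDiff ℝ (⊤ : ℕ∞) f) (j : Fin n) :
    ContDiff ℝ (⊤ : ℕ∞) (pd j f) :=
  (hf.fderiv_right (by simp)).clm_apply contDiff_const

lemma pd_hcs {f : Rn n → ℝ} (hf : HasCompactSupport f) (j : Fin n) :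
    HasCompactSupport (pd j f) :=
  (hf.fderiv ℝ).comp_left (g := fun L : (Rn n) →L[ℝ] ℝ => L (EuclideanSpace.single j 1)) rfl

lemma pd_mul {f g : Rn n → ℝ} {x : Rn n} (hf : DifferentiableAt ℝ f x)
    (hg : DifferentiableAt ℝ g x) (j : Fin n) :
    pd j (fun y => f y * g y) x = pd j f x * g x + f x * pd j g x := by
  unfold pd
  rw [fderiv_fun_mul hf hg]
  simp
  ring

lemma pd_sub {f g : Rn n → ℝ} {x : Rn n} (hf : DifferentiableAt ℝ f x)
    (hg : DifferentiableAt ℝ g x) (j : Fin n) :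
    pd j (fun y => f y - g y) x = pd j f x - pd j g x := by
  unfold pd
  rw [fderiv_fun_sub hf hg]
  simp

lemma pd_exp_neg {φ : Rn n → ℝ} (hφ : ContDiff ℝ (⊤ : ℕ∞) φ) (j : Fin n) (x : Rn n) :
    pd j (fun y => Real.exp (-(φ y))) x = -(pd j φ x) * Real.exp (-(φ x)) := by
  have h1 : HasFDerivAt φ (fderiv ℝ φ x) x := (hφ.differentiable (by simp) x).hasFDerivAt
  have h2 : HasFDerivAt (fun y => Real.exp (-(φ y))) _ x := h1.neg.exp
  unfold pd
  rw [h2.fderiv]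
  simp [mul_comm]

lemma pd_comm {f : Rn n → ℝ} (hf : ContDiff ℝ (⊤ : ℕ∞) f) (j k : Fin n) (x : Rn n) :
    pd j (pd k f) x = pd k (pd j f) x := by
  have hd : Differentiable ℝ f := hf.differentiable (by simp)
  have hf' : ContDiff ℝ (⊤ : ℕ∞) (fderiv ℝ f) := hf.fderiv_right (by simp)
  have H : ∀ a b : Fin n, pd a (pd b f) x
      = fderiv ℝ (fderiv ℝ f) x (EuclideanSpace.single a 1) (EuclideanSpace.single b 1) := by
    intro a b
    show fderiv ℝ (fun y => fderiv ℝ f y (EuclideanSpace.single b 1)) x _ = _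
    rw [fderiv_clm_apply (hf'.differentiable (by simp) x) (differentiableAt_const _)]
    simp
  rw [H, H]
  exact second_derivative_symmetric (fun y => (hd y).hasFDerivAt)
    ((hf'.differentiable (by simp) x).hasFDerivAt) _ _

lemma integrable_cc {f : Rn n → ℝ} (hf : Continuous f) (h : HasCompactSupport f) :
    Integrable f volume :=
  hf.integrable_of_hasCompactSupport h

lemma cont_exp_neg {φ : Rn n → ℝ} (hφ : ContDiff ℝ (⊤ : ℕ∞) φ) :
    Continuous (fun x : Rn n => Real.exp (-(φ x))) :=
  Real.continuous_exp.comp (hφ.continuous.neg)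

/-- Basic weighted integration by parts:
`∫ (∂ⱼu - u ∂ⱼφ) w e^{-φ} = - ∫ u ∂ⱼw e^{-φ}` for compactly supported smooth `u, w`. -/
lemma ibp_basic {φ : Rn n → ℝ} (hφ : ContDiff ℝ (⊤ : ℕ∞) φ) {u w : Rn n → ℝ}
    (hu : ContDiff ℝ (⊤ : ℕ∞) u) (hcu : HasCompactSupport u)
    (hw : ContDiff ℝ (⊤ : ℕ∞) w) (hcw : HasCompactSupport w) (j : Fin n) :
    ∫ x, (pd j u x - u x * pd j φ x) * w x * Real.exp (-(φ x))
      = - ∫ x, u x * pd j w x * Real.exp (-(φ x)) := by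
  set E : Rn n → ℝ := fun x => Real.exp (-(φ x)) with hE
  have hEc : Continuous E := cont_exp_neg hφ
  have hEsm : ContDiff ℝ (⊤ : ℕ∞) E := (hφ.neg).exp
  set g : Rn n → ℝ := fun x => w x * E x with hg
  have hgc : ContDiff ℝ (⊤ : ℕ∞) g := hw.mul hEsm
  have hgcs : HasCompactSupport g := hcw.mul_right
  have hpdg : ∀ x, pd j g x = pd j w x * E x + w x * (-(pd j φ x) * E x) := by
    intro x
    rw [hg]
    rw [pd_mul (hw.differentiable (by simp) x) (hEsm.differentiable (by simp) x) j]
    rw [pd_exp_neg hφ j x]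
  -- integration by parts from mathlib
  have hmain : ∫ x, u x * pd j g x = - ∫ x, pd j u x * g x := by
    have h1 : Integrable (fun x => pd j u x * g x) volume :=
      integrable_cc ((pd_contDiff hu j).continuous.mul (hgc.continuous))
        ((pd_hcs hcu j).mul_right)
    have h2 : Integrable (fun x => u x * pd j g x) volume :=
      integrable_cc (hu.continuous.mul ((pd_contDiff hgc j).continuous))
        (hcu.mul_right)
    have h3 : Integrable (fun x => u x * g x) volume :=
      integrable_cc (hu.continuous.mul hgc.continuous) (hcu.mul_right)
    exact integral_mul_fderiv_eq_neg_fderiv_mul_of_integrable h1 h2 h3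
      (fun x _ => hu.differentiable (by simp) x) (fun x _ => hgc.differentiable (by simp) x)
  have hI1 : Integrable (fun x => u x * (pd j w x * E x)) volume :=
    integrable_cc (hu.continuous.mul (((pd_contDiff hw j).continuous).mul hEc))
      hcu.mul_right
  have hI2 : Integrable (fun x => u x * (w x * (pd j φ x * E x))) volume :=
    integrable_cc (hu.continuous.mul (hw.continuous.mul
      (((pd_contDiff hφ j).continuous).mul hEc))) hcu.mul_right
  have expand : (fun x => u x * pd j g x)
      = fun x => u x * (pd j w x * E x) - u x * (w x * (pd j φ x * E x)) := by
    funext x; rw [hpdg x]; ring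
  rw [expand] at hmain
  rw [integral_sub hI1 hI2] at hmain
  have e1 : ∫ x, u x * pd j w x * E x = ∫ x, u x * (pd j w x * E x) := by
    congr 1; funext x; ring
  have e2 : ∫ x, (pd j u x - u x * pd j φ x) * w x * E x
      = (∫ x, pd j u x * g x) - ∫ x, u x * (w x * (pd j φ x * E x)) := by
    rw [← integral_sub (integrable_cc (f := fun x => pd j u x * g x) ((pd_contDiff hu j).continuous.mul
        (hgc.continuous)) ((pd_hcs hcu j).mul_right)) hI2]
    congr 1; funext x; rw [hg]; ring
  rw [e2, e1]
  linarith [hmain]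

lemma key_ibp {φ : Rn n → ℝ} (hφ : ContDiff ℝ (⊤ : ℕ∞) φ) {u v : Rn n → ℝ}
    (hu : ContDiff ℝ (⊤ : ℕ∞) u) (hcu : HasCompactSupport u)
    (hv : ContDiff ℝ (⊤ : ℕ∞) v) (hcv : HasCompactSupport v) (j k : Fin n) :
    ∫ x, (pd j u x - u x * pd j φ x) * (pd k v x - v x * pd k φ x) * Real.exp (-(φ x))
      = (∫ x, pd k u x * pd j v x * Real.exp (-(φ x)))
        + ∫ x, pd j (pd k φ) x * u x * v x * Real.exp (-(φ x)) := by
  have hEc : Continuous (fun x : Rn n => Real.exp (-(φ x))) := cont_exp_neg hφ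
  set w : Rn n → ℝ := fun x => pd k v x - v x * pd k φ x with hw
  have hwsm : ContDiff ℝ (⊤ : ℕ∞) w :=
    (pd_contDiff hv k).sub (hv.mul (pd_contDiff hφ k))
  have hwcs : HasCompactSupport w := by
    have h1 : HasCompactSupport (fun x => pd k v x) := pd_hcs hcv k
    have h2 : HasCompactSupport (fun x => v x * pd k φ x) := hcv.mul_right
    have h3 : w = fun x => pd k v x + -(v x * pd k φ x) := by
      funext x; rw [hw]; ring
    rw [h3]
    exact h1.add h2.neg
  have step1 : ∫ x, (pd j u x - u x * pd j φ x) * w x * Real.exp (-(φ x))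
      = - ∫ x, u x * pd j w x * Real.exp (-(φ x)) :=
    ibp_basic hφ hu hcu hwsm hwcs j
  have hpdw : ∀ x, pd j w x
      = pd k (pd j v) x - pd j v x * pd k φ x - v x * pd j (pd k φ) x := by
    intro x
    rw [hw]
    rw [pd_sub (g := fun y => v y * pd k φ y) ((pd_contDiff hv k).differentiable (by simp) x)
      (((hv.differentiable (by simp) x)).mul ((pd_contDiff hφ k).differentiable (by simp) x)) j]
    rw [pd_mul (hv.differentiable (by simp) x) ((pd_contDiff hφ k).differentiable (by simp) x) j]
    rw [pd_comm hv j k x]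
    ring
  have hA : Integrable (fun x => (pd k (pd j v) x - pd j v x * pd k φ x) * u x
      * Real.exp (-(φ x))) volume := by
    refine integrable_cc ?_ ?_
    · exact (((pd_contDiff (pd_contDiff hv j) k).continuous.sub
        ((pd_contDiff hv j).continuous.mul (pd_contDiff hφ k).continuous)).mul
        hu.continuous).mul hEc
    · exact (hcu.mul_left).mul_right
  have hB : Integrable (fun x => pd j (pd k φ) x * u x * v x * Real.exp (-(φ x))) volume := by
    refine integrable_cc ?_ ?_
    · exact (((pd_contDiff (pd_contDiff hφ k) j).continuous.mul hu.continuous).mul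
        hv.continuous).mul hEc
    · exact ((hcu.mul_left).mul_right).mul_right
  have split : ∫ x, u x * pd j w x * Real.exp (-(φ x))
      = (∫ x, (pd k (pd j v) x - pd j v x * pd k φ x) * u x * Real.exp (-(φ x)))
        - ∫ x, pd j (pd k φ) x * u x * v x * Real.exp (-(φ x)) := by
    rw [← integral_sub hA hB]
    congr 1; funext x; rw [hpdw x]; ring
  have step2 : ∫ x, (pd k (pd j v) x - pd j v x * pd k φ x) * u x * Real.exp (-(φ x))
      = - ∫ x, pd j v x * pd k u x * Real.exp (-(φ x)) :=
    ibp_basic hφ (pd_contDiff hv j) (pd_hcs hcv j) hu hcu k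
  have comm : ∫ x, pd j v x * pd k u x * Real.exp (-(φ x))
      = ∫ x, pd k u x * pd j v x * Real.exp (-(φ x)) := by
    congr 1; funext x; ring
  rw [step1, split, step2, comm]
  ring


lemma pd_alt {q : ℕ} {α : Form n q} (hα : IsAlt α) (hsm : IsSmoothC α) (a : Fin n)
    (σ : Equiv.Perm (Fin q)) (J : Fin q → Fin n) (x : Rn n) :
    pd a (α (J ∘ σ)) x = ((Equiv.Perm.sign σ : ℤ) : ℝ) * pd a (α J) x := by
  have h : α (J ∘ σ) = fun y => ((Equiv.Perm.sign σ : ℤ) : ℝ) * α J y :=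
    funext fun y => hα σ J y
  unfold pd
  rw [h, fderiv_const_mul ((hsm J).1.differentiable (by simp) x)]
  simp

lemma mul_sum2_mul {c e : ℝ} {A B : Type*} [Fintype A] [Fintype B] (f : A → B → ℝ) :
    (c * ∑ a : A, ∑ b : B, f a b) * e = ∑ a : A, ∑ b : B, c * (f a b * e) := by
  rw [Finset.mul_sum, Finset.sum_mul]
  refine Finset.sum_congr rfl fun a _ => ?_
  rw [Finset.mul_sum, Finset.sum_mul]
  exact Finset.sum_congr rfl fun b _ => by ring

lemma mul_sum3_mul {c e : ℝ} {A B C : Type*} [Fintype A] [Fintype B] [Fintype C]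
    (f : A → B → C → ℝ) :
    (c * ∑ a : A, ∑ b : B, ∑ d : C, f a b d) * e
      = ∑ a : A, ∑ b : B, ∑ d : C, c * (f a b d * e) := by
  rw [Finset.mul_sum, Finset.sum_mul]
  refine Finset.sum_congr rfl fun a _ => ?_
  rw [Finset.mul_sum, Finset.sum_mul]
  refine Finset.sum_congr rfl fun b _ => ?_
  rw [Finset.mul_sum, Finset.sum_mul]
  exact Finset.sum_congr rfl fun d _ => by ring

lemma sum3_add {A B C : Type*} [Fintype A] [Fintype B] [Fintype C]
    (f g : A → B → C → ℝ) (c : ℝ) :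
    ∑ a : A, ∑ b : B, ∑ d : C, c * (f a b d + g a b d)
      = (∑ a : A, ∑ b : B, ∑ d : C, c * f a b d)
        + ∑ a : A, ∑ b : B, ∑ d : C, c * g a b d := by
  rw [← Finset.sum_add_distrib]
  refine Finset.sum_congr rfl fun a _ => ?_
  rw [← Finset.sum_add_distrib]
  refine Finset.sum_congr rfl fun b _ => ?_
  rw [← Finset.sum_add_distrib]
  exact Finset.sum_congr rfl fun d _ => by ring

lemma integral_sum3 {A B C : Type*} [Fintype A] [Fintype B] [Fintype C]
    (f : A → B → C → Rn n → ℝ) (hf : ∀ a b c, Integrable (f a b c) volume) :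
    ∫ x, ∑ a : A, ∑ b : B, ∑ c : C, f a b c x
      = ∑ a : A, ∑ b : B, ∑ c : C, ∫ x, f a b c x := by
  have h2 : ∀ a b, Integrable (fun x => ∑ c : C, f a b c x) volume :=
    fun a b => integrable_finset_sum _ (fun c _ => hf a b c)
  have h1 : ∀ a, Integrable (fun x => ∑ b : B, ∑ c : C, f a b c x) volume :=
    fun a => integrable_finset_sum _ (fun b _ => h2 a b)
  rw [integral_finset_sum _ (fun a _ => h1 a)]
  refine Finset.sum_congr rfl fun a _ => ?_
  rw [integral_finset_sum _ (fun b _ => h2 a b)]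
  refine Finset.sum_congr rfl fun b _ => ?_
  rw [integral_finset_sum _ (fun c _ => hf a b c)]

end Aux

/-- the basic identity
`‖T*α‖² + ‖dα‖² = ∫ Σ'_I Σ_{j,k} φ_{jk} α_{jI} α_{kI} e^{-φ} + ∫ Σ'_J Σ_j |∂_j α_J|² e^{-φ}`. -/
theorem stmt2 {n p : ℕ} (φ : Rn n → ℝ) (hφ : ContDiff ℝ (⊤ : ℕ∞) φ)
    (α : Form n (p + 1)) (hα : IsAlt α) (hsm : IsSmoothC α) :
    norm2F φ (Tstar φ α) + norm2F φ (dC α)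
      = (∫ x, ((Nat.factorial p : ℝ)⁻¹ *
            ∑ I : Fin p → Fin n, ∑ j : Fin n, ∑ k : Fin n,
              pd j (pd k φ) x * α (Fin.cons j I) x * α (Fin.cons k I) x) *
            Real.exp (-(φ x)))
        + ∫ x, ((Nat.factorial (p + 1) : ℝ)⁻¹ *
            ∑ J : Fin (p + 1) → Fin n, ∑ j : Fin n, (pd j (α J) x) ^ 2) *
            Real.exp (-(φ x)) := by
  classical
  have hsmJ : ∀ J, ContDiff ℝ (⊤ : ℕ∞) (α J) := fun J => (hsm J).1
  have hcsJ : ∀ J, HasCompactSupport (α J) := fun J => (hsm J).2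
  have hEc : Continuous (fun x : Rn n => Real.exp (-(φ x))) := cont_exp_neg hφ
  -- continuity / support of the "δ"-factors
  have hFc : ∀ (I : Fin p → Fin n) (j : Fin n),
      Continuous (fun x => pd j (α (Fin.cons j I)) x - α (Fin.cons j I) x * pd j φ x) :=
    fun I j => (pd_contDiff (hsmJ _) j).continuous.sub
      ((hsmJ _).continuous.mul (pd_contDiff hφ j).continuous)
  have hFcs : ∀ (I : Fin p → Fin n) (j : Fin n),
      HasCompactSupport (fun x => pd j (α (Fin.cons j I)) x - α (Fin.cons j I) x * pd j φ x) := by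
    intro I j
    have h3 : (fun x => pd j (α (Fin.cons j I)) x - α (Fin.cons j I) x * pd j φ x)
        = fun x => pd j (α (Fin.cons j I)) x + -(α (Fin.cons j I) x * pd j φ x) := by
      funext x; ring
    rw [h3]
    exact (pd_hcs (hcsJ _) j).add ((hcsJ _).mul_right).neg
  -- Part 1 : the `T*` term
  have part1 : norm2F φ (Tstar φ α)
      = ∑ I : Fin p → Fin n, ∑ j : Fin n, ∑ k : Fin n,
          (Nat.factorial p : ℝ)⁻¹
            * ((∫ x, pd k (α (Fin.cons j I)) x * pd j (α (Fin.cons k I)) x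
                  * Real.exp (-(φ x)))
              + ∫ x, pd j (pd k φ) x * α (Fin.cons j I) x * α (Fin.cons k I) x
                  * Real.exp (-(φ x))) := by
    have point1 : ∀ x, normSq (Tstar φ α) x * Real.exp (-(φ x))
        = ∑ I : Fin p → Fin n, ∑ j : Fin n, ∑ k : Fin n,
            (Nat.factorial p : ℝ)⁻¹
              * ((pd j (α (Fin.cons j I)) x - α (Fin.cons j I) x * pd j φ x)
                  * (pd k (α (Fin.cons k I)) x - α (Fin.cons k I) x * pd k φ x)
                * Real.exp (-(φ x))) := by
      intro x
      simp only [normSq, Tstar]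
      have hsq : ∀ I : Fin p → Fin n,
          (∑ j : Fin n, (-(pd j (α (Fin.cons j I)) x) + α (Fin.cons j I) x * pd j φ x)) ^ 2
          = ∑ j : Fin n, ∑ k : Fin n,
              (pd j (α (Fin.cons j I)) x - α (Fin.cons j I) x * pd j φ x)
                * (pd k (α (Fin.cons k I)) x - α (Fin.cons k I) x * pd k φ x) := by
        intro I
        have h0 : (∑ j : Fin n,
              (-(pd j (α (Fin.cons j I)) x) + α (Fin.cons j I) x * pd j φ x))
            = -∑ j : Fin n,
                (pd j (α (Fin.cons j I)) x - α (Fin.cons j I) x * pd j φ x) := by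
          rw [← Finset.sum_neg_distrib]
          exact Finset.sum_congr rfl fun j _ => by ring
        rw [h0, neg_sq, sq, Finset.sum_mul_sum]
      rw [show (∑ I : Fin p → Fin n,
            (∑ j : Fin n, (-(pd j (α (Fin.cons j I)) x)
              + α (Fin.cons j I) x * pd j φ x)) ^ 2)
          = ∑ I : Fin p → Fin n, ∑ j : Fin n, ∑ k : Fin n,
              (pd j (α (Fin.cons j I)) x - α (Fin.cons j I) x * pd j φ x)
                * (pd k (α (Fin.cons k I)) x - α (Fin.cons k I) x * pd k φ x) from
        Finset.sum_congr rfl fun I _ => hsq I]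
      exact mul_sum3_mul _
    have hInt : ∀ (I : Fin p → Fin n) (j k : Fin n),
        Integrable (fun x => (Nat.factorial p : ℝ)⁻¹
          * ((pd j (α (Fin.cons j I)) x - α (Fin.cons j I) x * pd j φ x)
              * (pd k (α (Fin.cons k I)) x - α (Fin.cons k I) x * pd k φ x)
            * Real.exp (-(φ x)))) volume := by
      intro I j k
      exact (integrable_cc (((hFc I j).mul (hFc I k)).mul hEc)
        (((hFcs I j).mul_right).mul_right)).const_mul _
    calc norm2F φ (Tstar φ α)
        = ∫ x, normSq (Tstar φ α) x * Real.exp (-(φ x)) := rfl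
      _ = ∫ x, ∑ I : Fin p → Fin n, ∑ j : Fin n, ∑ k : Fin n,
            (Nat.factorial p : ℝ)⁻¹
              * ((pd j (α (Fin.cons j I)) x - α (Fin.cons j I) x * pd j φ x)
                  * (pd k (α (Fin.cons k I)) x - α (Fin.cons k I) x * pd k φ x)
                * Real.exp (-(φ x))) :=
          integral_congr_ae (Filter.Eventually.of_forall point1)
      _ = ∑ I : Fin p → Fin n, ∑ j : Fin n, ∑ k : Fin n,
            ∫ x, (Nat.factorial p : ℝ)⁻¹
              * ((pd j (α (Fin.cons j I)) x - α (Fin.cons j I) x * pd j φ x)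
                  * (pd k (α (Fin.cons k I)) x - α (Fin.cons k I) x * pd k φ x)
                * Real.exp (-(φ x))) :=
          integral_sum3 _ hInt
      _ = _ := by
          refine Finset.sum_congr rfl fun I _ => Finset.sum_congr rfl fun j _ =>
            Finset.sum_congr rfl fun k _ => ?_
          rw [MeasureTheory.integral_const_mul]
          congr 1
          exact key_ibp hφ (hsmJ (Fin.cons j I)) (hcsJ (Fin.cons j I))
            (hsmJ (Fin.cons k I)) (hcsJ (Fin.cons k I)) j k
  -- Part 2 : the `dα` term
  have hBt : ∀ (I : Fin p → Fin n) (j k : Fin n),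
      Integrable (fun x => (Nat.factorial p : ℝ)⁻¹
        * (pd k (α (Fin.cons j I)) x * pd j (α (Fin.cons k I)) x
            * Real.exp (-(φ x)))) volume := fun I j k =>
    (integrable_cc (((pd_contDiff (hsmJ _) k).continuous.mul
        (pd_contDiff (hsmJ _) j).continuous).mul hEc)
      (((pd_hcs (hcsJ _) k).mul_right).mul_right)).const_mul _
  have part2 : norm2F φ (dC α)
      = (∫ x, ((Nat.factorial (p + 1) : ℝ)⁻¹ *
            ∑ J : Fin (p + 1) → Fin n, ∑ j : Fin n, (pd j (α J) x) ^ 2) *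
            Real.exp (-(φ x)))
        - ∑ I : Fin p → Fin n, ∑ j : Fin n, ∑ k : Fin n,
            (Nat.factorial p : ℝ)⁻¹
              * ∫ x, pd k (α (Fin.cons j I)) x * pd j (α (Fin.cons k I)) x
                  * Real.exp (-(φ x)) := by
    have point2 : ∀ x, normSq (dC α) x * Real.exp (-(φ x))
        = ((Nat.factorial (p + 1) : ℝ)⁻¹ *
            ∑ J : Fin (p + 1) → Fin n, ∑ j : Fin n, (pd j (α J) x) ^ 2) *
            Real.exp (-(φ x))
          - ∑ I : Fin p → Fin n, ∑ j : Fin n, ∑ k : Fin n,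
              (Nat.factorial p : ℝ)⁻¹
                * (pd k (α (Fin.cons j I)) x * pd j (α (Fin.cons k I)) x
                  * Real.exp (-(φ x))) := by
      intro x
      have hcm := comb_main (fun a J => pd a (α J) x)
        (fun a σ J => pd_alt hα hsm a σ J x)
      have h1 : normSq (dC α) x
          = ((Nat.factorial (p + 1) : ℝ)⁻¹ *
              ∑ J : Fin (p + 1) → Fin n, ∑ j : Fin n, (pd j (α J) x) ^ 2)
            - (Nat.factorial p : ℝ)⁻¹ *
              ∑ I : Fin p → Fin n, ∑ j : Fin n, ∑ k : Fin n,
                pd k (α (Fin.cons j I)) x * pd j (α (Fin.cons k I)) x := by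
        simp only [normSq, dC]
        exact hcm
      rw [h1, sub_mul]
      congr 1
      exact mul_sum3_mul _
    have hAE : Integrable (fun x => ((Nat.factorial (p + 1) : ℝ)⁻¹ *
        ∑ J : Fin (p + 1) → Fin n, ∑ j : Fin n, (pd j (α J) x) ^ 2) *
        Real.exp (-(φ x))) volume := by
      have hrw : (fun x => ((Nat.factorial (p + 1) : ℝ)⁻¹ *
          ∑ J : Fin (p + 1) → Fin n, ∑ j : Fin n, (pd j (α J) x) ^ 2) *
          Real.exp (-(φ x)))
          = fun x => ∑ J : Fin (p + 1) → Fin n, ∑ j : Fin n,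
              (Nat.factorial (p + 1) : ℝ)⁻¹ * ((pd j (α J) x) ^ 2 * Real.exp (-(φ x))) := by
        funext x; exact mul_sum2_mul _
      rw [hrw]
      refine integrable_finset_sum _ fun J _ => integrable_finset_sum _ fun j _ => ?_
      refine Integrable.const_mul ?_ _
      have h2 : (fun x => (pd j (α J) x) ^ 2 * Real.exp (-(φ x)))
          = fun x => (pd j (α J) x * pd j (α J) x) * Real.exp (-(φ x)) := by
        funext x; ring
      rw [h2]
      exact integrable_cc (((pd_contDiff (hsmJ J) j).continuous.mul
          (pd_contDiff (hsmJ J) j).continuous).mul hEc)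
        (((pd_hcs (hcsJ J) j).mul_right).mul_right)
    have hBsum : Integrable (fun x => ∑ I : Fin p → Fin n, ∑ j : Fin n, ∑ k : Fin n,
        (Nat.factorial p : ℝ)⁻¹
          * (pd k (α (Fin.cons j I)) x * pd j (α (Fin.cons k I)) x
            * Real.exp (-(φ x)))) volume :=
      integrable_finset_sum _ fun I _ => integrable_finset_sum _ fun j _ =>
        integrable_finset_sum _ fun k _ => hBt I j k
    calc norm2F φ (dC α)
        = ∫ x, normSq (dC α) x * Real.exp (-(φ x)) := rfl
      _ = ∫ x, (((Nat.factorial (p + 1) : ℝ)⁻¹ *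
            ∑ J : Fin (p + 1) → Fin n, ∑ j : Fin n, (pd j (α J) x) ^ 2) *
            Real.exp (-(φ x))
          - ∑ I : Fin p → Fin n, ∑ j : Fin n, ∑ k : Fin n,
              (Nat.factorial p : ℝ)⁻¹
                * (pd k (α (Fin.cons j I)) x * pd j (α (Fin.cons k I)) x
                  * Real.exp (-(φ x)))) :=
          integral_congr_ae (Filter.Eventually.of_forall point2)
      _ = (∫ x, ((Nat.factorial (p + 1) : ℝ)⁻¹ *
            ∑ J : Fin (p + 1) → Fin n, ∑ j : Fin n, (pd j (α J) x) ^ 2) *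
            Real.exp (-(φ x)))
          - ∫ x, ∑ I : Fin p → Fin n, ∑ j : Fin n, ∑ k : Fin n,
              (Nat.factorial p : ℝ)⁻¹
                * (pd k (α (Fin.cons j I)) x * pd j (α (Fin.cons k I)) x
                  * Real.exp (-(φ x))) := integral_sub hAE hBsum
      _ = _ := by
          congr 1
          rw [integral_sum3 _ hBt]
          refine Finset.sum_congr rfl fun I _ => Finset.sum_congr rfl fun j _ =>
            Finset.sum_congr rfl fun k _ => ?_
          rw [MeasureTheory.integral_const_mul]
  -- Part 3 : the curvature term on the right-hand side
  have hQt : ∀ (I : Fin p → Fin n) (j k : Fin n),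
      Integrable (fun x => (Nat.factorial p : ℝ)⁻¹
        * (pd j (pd k φ) x * α (Fin.cons j I) x * α (Fin.cons k I) x
            * Real.exp (-(φ x)))) volume := by
    intro I j k
    refine Integrable.const_mul (integrable_cc ?_ ?_) _
    · exact (((pd_contDiff (pd_contDiff hφ k) j).continuous.mul
        (hsmJ _).continuous).mul (hsmJ _).continuous).mul hEc
    · exact ((((hcsJ (Fin.cons j I)).mul_left).mul_right).mul_right)
  have part3 : (∫ x, ((Nat.factorial p : ℝ)⁻¹ *
        ∑ I : Fin p → Fin n, ∑ j : Fin n, ∑ k : Fin n,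
          pd j (pd k φ) x * α (Fin.cons j I) x * α (Fin.cons k I) x) *
        Real.exp (-(φ x)))
      = ∑ I : Fin p → Fin n, ∑ j : Fin n, ∑ k : Fin n,
          (Nat.factorial p : ℝ)⁻¹
            * ∫ x, pd j (pd k φ) x * α (Fin.cons j I) x * α (Fin.cons k I) x
                * Real.exp (-(φ x)) := by
    have hrw : (fun x => ((Nat.factorial p : ℝ)⁻¹ *
        ∑ I : Fin p → Fin n, ∑ j : Fin n, ∑ k : Fin n,
          pd j (pd k φ) x * α (Fin.cons j I) x * α (Fin.cons k I) x) *
        Real.exp (-(φ x)))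
        = fun x => ∑ I : Fin p → Fin n, ∑ j : Fin n, ∑ k : Fin n,
            (Nat.factorial p : ℝ)⁻¹
              * (pd j (pd k φ) x * α (Fin.cons j I) x * α (Fin.cons k I) x
                * Real.exp (-(φ x))) := by
      funext x; exact mul_sum3_mul _
    rw [hrw, integral_sum3 _ hQt]
    refine Finset.sum_congr rfl fun I _ => Finset.sum_congr rfl fun j _ =>
      Finset.sum_congr rfl fun k _ => ?_
    rw [MeasureTheory.integral_const_mul]
  rw [part1, part2, part3, sum3_add]
  ring
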